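/- Let G be a δ-hyperbolic group with finite generating set S. There is a computable constant M, depending only on δ, |S|, and the word lengths |u| and |v|, such that if two elements u, v ∈ G are conjugate in G, then there exists g ∈ G with u = g v g⁻¹ and |g| ≤ M. -/

import Mathlib

/-!
Take a conjugator `g` of minimal length and a geodesic word for it. Conjugating `u` by the
prefixes `aᵢ` of that word gives elements `aᵢ⁻¹ u aᵢ` of length at most `|u| + 2|v| + 4δ`: the
geodesic from `1` to `g` and its translate by `u` start `|u|` apart and end `|v|` apart, so by
the four-point condition they fellow-travel. There are at most `(2|S| + 1)^(|u| + 2|v| + ⌈4δ⌉)`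
such elements, so if `g` were longer, two prefixes `aᵢ`, `aⱼ` with `i < j` would give the same
conjugate, and cutting the subword between them out of `g` would give a shorter conjugator.
-/

noncomputable def wordLength {G : Type*} [Group G] (S : Set G) (x : G) : ℕ :=
  sInf {n : ℕ | ∃ f : Fin n → G, (∀ i, f i ∈ S ∨ (f i)⁻¹ ∈ S) ∧ x = (List.ofFn f).prod}

noncomputable def wdist {G : Type*} [Group G] (S : Set G) (x y : G) : ℝ :=
  wordLength S (x⁻¹ * y)

/-- Gromov's four-point condition for the word metric. -/
def IsHyperbolicGroup {G : Type*} [Group G] (S : Set G) (δ : ℝ) : Prop :=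
  ∀ x y z w : G, wdist S x w + wdist S y z ≤
    max (wdist S x y + wdist S z w) (wdist S x z + wdist S y w) + 2 * δ

open Pointwise Finset

section WordLength

variable {G : Type*} [Group G] {S : Set G}

theorem wordLength_eq_sInf_mem_pow (x : G) :
    wordLength S x = sInf {n : ℕ | x ∈ (S ∪ S⁻¹) ^ n} := by
  refine congrArg sInf (Set.ext fun n => ?_)
  simp only [Set.mem_ofPred_eq, Set.mem_pow]
  constructor
  · rintro ⟨f, hf, rfl⟩
    exact ⟨fun i => ⟨f i, hf i⟩, rfl⟩
  · rintro ⟨f, rfl⟩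
    exact ⟨fun i => f i, fun i => (f i).2, rfl⟩

theorem wordLength_le_of_mem_pow {x : G} {n : ℕ} (hx : x ∈ (S ∪ S⁻¹) ^ n) :
    wordLength S x ≤ n := by
  rw [wordLength_eq_sInf_mem_pow]
  exact Nat.sInf_le hx

theorem wordLength_inv (x : G) : wordLength S x⁻¹ = wordLength S x := by
  have hsymm : (S ∪ S⁻¹)⁻¹ = S ∪ S⁻¹ := by rw [Set.union_inv, inv_inv, Set.union_comm]
  simp only [wordLength_eq_sInf_mem_pow, ← Set.mem_inv, ← inv_pow, hsymm]

theorem exists_mem_pow_of_closure_eq_top (hS : Subgroup.closure S = ⊤) (x : G) :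
    ∃ n, x ∈ (S ∪ S⁻¹) ^ n := by
  have hx : x ∈ Submonoid.closure (S ∪ S⁻¹) := by
    rw [← Subgroup.closure_toSubmonoid, hS]
    trivial
  induction hx using Submonoid.closure_induction with
  | mem y hy => exact ⟨1, by rwa [pow_one]⟩
  | one => exact ⟨0, by rw [pow_zero]; rfl⟩
  | mul y z _ _ hy hz =>
    obtain ⟨m, hy⟩ := hy
    obtain ⟨n, hz⟩ := hz
    exact ⟨m + n, by rw [pow_add]; exact Set.mul_mem_mul hy hz⟩

-- Outside the subgroup generated by `S`, `wordLength` takes the junk value `sInf ∅ = 0`.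
theorem mem_pow_wordLength (hS : Subgroup.closure S = ⊤) (x : G) :
    x ∈ (S ∪ S⁻¹) ^ wordLength S x := by
  rw [wordLength_eq_sInf_mem_pow]
  exact Nat.sInf_mem (exists_mem_pow_of_closure_eq_top hS x)

theorem wordLength_mul_le (hS : Subgroup.closure S = ⊤) (x y : G) :
    wordLength S (x * y) ≤ wordLength S x + wordLength S y := by
  apply wordLength_le_of_mem_pow
  rw [pow_add]
  exact Set.mul_mem_mul (mem_pow_wordLength hS x) (mem_pow_wordLength hS y)

theorem exists_wordLength_eq_of_le (hS : Subgroup.closure S = ⊤) {x : G} {i : ℕ}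
    (hi : i ≤ wordLength S x) :
    ∃ a, wordLength S a = i ∧ wordLength S (a⁻¹ * x) = wordLength S x - i := by
  have hx := mem_pow_wordLength hS x
  rw [← Nat.add_sub_cancel' hi, pow_add] at hx
  obtain ⟨a, ha, b, hb, rfl⟩ := Set.mem_mul.1 hx
  have hab := wordLength_mul_le hS a b
  have ha' := wordLength_le_of_mem_pow ha
  have hb' := wordLength_le_of_mem_pow hb
  refine ⟨a, by omega, ?_⟩
  rw [inv_mul_cancel_left]
  omega

end WordLength

section WordMetric

variable {G : Type*} [Group G] {S : Set G}

theorem wdist_nonneg (x y : G) : 0 ≤ wdist S x y := Nat.cast_nonneg _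

theorem wdist_comm (x y : G) : wdist S x y = wdist S y x := by
  rw [wdist, wdist, ← wordLength_inv, mul_inv_rev, inv_inv]

theorem wdist_mul_left (g x y : G) : wdist S (g * x) (g * y) = wdist S x y := by
  simp only [wdist, mul_inv_rev, mul_assoc, inv_mul_cancel_left]

theorem wdist_triangle (hS : Subgroup.closure S = ⊤) (x y z : G) :
    wdist S x z ≤ wdist S x y + wdist S y z := by
  have hsplit : x⁻¹ * z = (x⁻¹ * y) * (y⁻¹ * z) := by group
  unfold wdist
  rw [hsplit]
  exact_mod_cast wordLength_mul_le hS _ _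

end WordMetric

theorem dist_le_of_fourPoint {X : Type*} {d : X → X → ℝ} {δ : ℝ}
    (hd : ∀ x y z w, d x w + d y z ≤ max (d x y + d z w) (d x z + d y w) + 2 * δ)
    (nonneg : ∀ x y, 0 ≤ d x y) (comm : ∀ x y, d x y = d y x)
    (triangle : ∀ x y z, d x z ≤ d x y + d y z)
    {x y a x' y' a' : X} (ha : d x a + d a y = d x y) (hxa : d x' a' = d x a)
    (hay : d a' y' = d a y) :
    d a a' ≤ d x x' + 2 * d y y' + 4 * δ := by
  have hδ : 0 ≤ δ := by linarith [max_self (d x x + d x x), hd x x x x]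
  have h₁ := hd a x y a'
  have h₂ := hd a' x y' y
  rw [comm a x, comm y a'] at h₁
  rw [comm a' x, comm y' y, hay] at h₂
  have hxa' := triangle x x' a'
  have hxy := triangle x y' y
  rw [comm y' y] at hxy
  have := nonneg a y
  have := nonneg x x'
  have := nonneg y y'
  rcases max_cases (d x a + d a' y) (d a y + d x a') with ⟨hm₁, _⟩ | ⟨hm₁, _⟩ <;>
  rcases max_cases (d x a' + d y y') (d a y + d x y) with ⟨hm₂, _⟩ | ⟨hm₂, _⟩ <;>
  linarith

section Hyperbolic

variable {G : Type*} [Group G] {S : Set G} {δ : ℝ}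

theorem wordLength_conj_le_of_geodesic (hS : Subgroup.closure S = ⊤)
    (hH : IsHyperbolicGroup S δ) {a g : G} (u : G)
    (hag : wordLength S a + wordLength S (a⁻¹ * g) = wordLength S g) :
    (wordLength S (a⁻¹ * u * a) : ℝ) ≤
      wordLength S u + 2 * wordLength S (g⁻¹ * u * g) + 4 * δ := by
  have key := dist_le_of_fourPoint hH wdist_nonneg wdist_comm (wdist_triangle hS)
    (x := 1) (y := g) (a := a) (x' := u) (y' := u * g) (a' := u * a)
    (by simp only [wdist, inv_one, one_mul]; exact_mod_cast hag)
    (by simp only [wdist, inv_one, one_mul, inv_mul_cancel_left]) (wdist_mul_left u a g)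
  simpa only [wdist, inv_one, one_mul, mul_assoc] using key

end Hyperbolic

section Conjugator

variable {G : Type*} [Group G] [DecidableEq G] {S : Finset G} {δ : ℝ}

theorem mem_pow_of_wordLength_le (hS : Subgroup.closure (S : Set G) = ⊤) {x : G} {K : ℕ}
    (hx : wordLength (S : Set G) x ≤ K) : x ∈ insert 1 (S ∪ S⁻¹) ^ K := by
  rw [← Finset.mem_coe, Finset.coe_pow, Finset.coe_insert, Finset.coe_union, Finset.coe_inv]
  exact Set.pow_subset_pow (Set.subset_insert _ _) (Set.mem_insert _ _) hx
    (mem_pow_wordLength hS x)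

theorem card_insert_one_union_inv_le (S : Finset G) : #(insert 1 (S ∪ S⁻¹)) ≤ 2 * #S + 1 := by
  have := Finset.card_union_le S S⁻¹
  have := Finset.card_insert_le (1 : G) (S ∪ S⁻¹)
  rw [Finset.card_inv] at *
  omega

theorem exists_shorter_conjugator (hS : Subgroup.closure (S : Set G) = ⊤)
    (hH : IsHyperbolicGroup (S : Set G) δ) {u v g : G} (hg : u = g * v * g⁻¹)
    (hlong : (2 * #S + 1) ^ (wordLength (S : Set G) u + 2 * wordLength (S : Set G) v + ⌈4 * δ⌉₊)
      < wordLength (S : Set G) g) :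
    ∃ g' : G, u = g' * v * g'⁻¹ ∧ wordLength (S : Set G) g' < wordLength (S : Set G) g := by
  set n := wordLength (S : Set G) g
  set K := wordLength (S : Set G) u + 2 * wordLength (S : Set G) v + ⌈4 * δ⌉₊
  have hv : g⁻¹ * u * g = v := by rw [hg]; group
  choose a ha_len ha_rest using fun i : Fin (n + 1) =>
    exists_wordLength_eq_of_le hS (Nat.lt_succ_iff.1 i.isLt)
  have hball : ∀ i, (a i)⁻¹ * u * a i ∈ insert 1 (S ∪ S⁻¹) ^ K := by
    intro i
    apply mem_pow_of_wordLength_le hS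
    have hconj := wordLength_conj_le_of_geodesic hS hH u (a := a i) (g := g)
      (by rw [ha_len, ha_rest]; omega)
    rw [hv] at hconj
    have hceil := Nat.le_ceil (4 * δ)
    have hK : (wordLength (S : Set G) ((a i)⁻¹ * u * a i) : ℝ) ≤ K := by
      simp only [K]; push_cast; linarith
    exact_mod_cast hK
  have hcard : #(insert 1 (S ∪ S⁻¹) ^ K) < #(Finset.univ : Finset (Fin (n + 1))) := by
    calc #(insert 1 (S ∪ S⁻¹) ^ K) ≤ #(insert 1 (S ∪ S⁻¹)) ^ K := Finset.card_pow_le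
      _ ≤ (2 * #S + 1) ^ K := Nat.pow_le_pow_left (card_insert_one_union_inv_le S) K
      _ < n + 1 := by omega
      _ = _ := by simp
  obtain ⟨i, -, j, -, hij, heq⟩ :=
    Finset.exists_ne_map_eq_of_card_lt_of_maps_to hcard (fun i _ => hball i)
  wlog hlt : i < j generalizing i j
  · exact this j i hij.symm heq.symm (lt_of_le_of_ne (not_lt.1 hlt) hij.symm)
  refine ⟨a i * ((a j)⁻¹ * g), ?_, ?_⟩
  · calc u = a i * ((a i)⁻¹ * u * a i) * (a i)⁻¹ := by group
      _ = a i * ((a j)⁻¹ * u * a j) * (a i)⁻¹ := by rw [heq]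
      _ = _ := by rw [hg]; group
  · have hshort := wordLength_mul_le hS (a i) ((a j)⁻¹ * g)
    have hj : (j : ℕ) ≤ n := Nat.lt_succ_iff.1 j.isLt
    rw [ha_len, ha_rest] at hshort
    omega

end Conjugator

/-- In a δ-hyperbolic group, if `u` and `v` are conjugate then there is a conjugator
of word length bounded by a constant `M` depending only on `δ`, `|S|`, `|u|` and
`|v|`. -/
theorem statement4 :
    ∃ M : ℝ → ℕ → ℕ → ℕ → ℕ,
      ∀ (G : Type) (_ : Group G) (S : Finset G) (δ : ℝ), 0 ≤ δ →
        Subgroup.closure (S : Set G) = ⊤ →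
        IsHyperbolicGroup (S : Set G) δ →
        ∀ u v : G, (∃ g : G, u = g * v * g⁻¹) →
          ∃ g : G, u = g * v * g⁻¹ ∧
            wordLength (S : Set G) g ≤
              M δ S.card (wordLength (S : Set G) u) (wordLength (S : Set G) v) := by
  refine ⟨fun δ s m n => (2 * s + 1) ^ (m + 2 * n + ⌈4 * δ⌉₊), ?_⟩
  intro G _ S δ _ hS hH u v hconj
  classical
  set conjugators := {g : G | u = g * v * g⁻¹}
  let g := Function.argminOn (wordLength (S : Set G)) conjugators hconj
  have hg : u = g * v * g⁻¹ := Function.argminOn_mem _ conjugators hconj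
  refine ⟨g, hg, not_lt.1 fun hlong => ?_⟩
  obtain ⟨g', hg', hshorter⟩ := exists_shorter_conjugator hS hH hg hlong
  exact hshorter.not_ge (Function.argminOn_le _ conjugators hg')
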